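/- arXiv:1801.01485 — 3 statements merged into one kernel-verified Lean document; each statement's English description precedes it below -/
import Mathlib

section
/- Let X be a real normed space, φ : X → ℝ∞ finite at x̄, ε ≥ 0, and x* ∈ ∂̂_ε φ(x̄). Suppose there is a neighborhood V of x̄ such that ⟨x*, x - x̄⟩ ≥ 0 for all x ∈ V. Then for every ξ > ε there exists a neighborhood W of x̄ such that φ(x) + ξ‖x - x̄‖ ≥ φ(x̄) for all x ∈ W (i.e., x̄ is a local stationary trap with weight factor ξ). -/
open Filter Topology

noncomputable def eSubgrad {X : Type*} [NormedAddCommGroup X] [NormedSpace ℝ X]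
    (φ : X → EReal) (xb : X) (ε : ℝ) (f : X →L[ℝ] ℝ) : Prop :=
  -(ε : EReal) ≤ Filter.liminf
    (fun x => (φ x - φ xb - ((f (x - xb) : ℝ) : EReal)) / ((‖x - xb‖ : ℝ) : EReal))
    (𝓝[≠] xb)

/-- ε-subdifferential certificate for local stationary traps. -/
theorem stmt3 {X : Type*} [NormedAddCommGroup X] [NormedSpace ℝ X]
    (φ : X → EReal) (xb : X) (hfin : φ xb ≠ ⊤ ∧ φ xb ≠ ⊥)
    (ε : ℝ) (hε : 0 ≤ ε) (f : X →L[ℝ] ℝ) (hsub : eSubgrad φ xb ε f)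
    (V : Set X) (hV : V ∈ 𝓝 xb) (hpos : ∀ x ∈ V, 0 ≤ f (x - xb)) :
    ∀ ξ : ℝ, ε < ξ → ∃ W ∈ 𝓝 xb, ∀ x ∈ W,
      φ xb ≤ φ x + ((ξ * ‖x - xb‖ : ℝ) : EReal) := by
  intro ξ hξ
  obtain ⟨b, hb⟩ : ∃ b : ℝ, φ xb = (b : EReal) := by
    lift φ xb to ℝ using ⟨hfin.1, hfin.2⟩ with b
    exact ⟨b, rfl⟩
  have hlt : (-(ξ : ℝ) : EReal) < Filter.liminf
      (fun x => (φ x - φ xb - ((f (x - xb) : ℝ) : EReal)) / ((‖x - xb‖ : ℝ) : EReal))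
      (𝓝[≠] xb) := by
    refine lt_of_lt_of_le ?_ hsub
    exact_mod_cast EReal.coe_lt_coe_iff.2 (neg_lt_neg hξ)
  have hev := Filter.eventually_lt_of_lt_liminf hlt
  rw [eventually_nhdsWithin_iff] at hev
  refine ⟨V ∩ {x | x ∈ ({xb}ᶜ : Set X) →
    (-(ξ : ℝ) : EReal) < (φ x - φ xb - ((f (x - xb) : ℝ) : EReal)) / ((‖x - xb‖ : ℝ) : EReal)},
    Filter.inter_mem hV hev, ?_⟩
  rintro x ⟨hxV, hx⟩
  by_cases hne : x = xb
  · subst hne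
    simp [hb]
  · have h := hx hne
    have hn : (0 : ℝ) < ‖x - xb‖ := by
      simpa [sub_eq_zero] using hne
    have hfr : (0 : ℝ) ≤ f (x - xb) := hpos x hxV
    rw [hb] at h ⊢
    cases hA : φ x with
    | top => rw [EReal.top_add_coe]; exact le_top
    | bot =>
      rw [hA] at h
      have : ((⊥ : EReal) - b - ((f (x - xb) : ℝ) : EReal)) / ((‖x - xb‖ : ℝ) : EReal) = ⊥ := by
        rw [show ((⊥ : EReal) - b - ((f (x - xb) : ℝ) : EReal)) = ⊥ by
          simp]
        exact EReal.bot_div_of_pos_ne_top (by exact_mod_cast hn) (by simp)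
      rw [this] at h
      exact absurd h (by simp)
    | coe a =>
      rw [hA] at h
      rw [show ((a : EReal) - b - ((f (x - xb) : ℝ) : EReal)) = ((a - b - f (x - xb) : ℝ) : EReal) by
        push_cast; ring, ← EReal.coe_div, ← EReal.coe_neg, EReal.coe_lt_coe_iff] at h
      rw [← EReal.coe_add, EReal.coe_le_coe_iff]
      have h2 : -ξ * ‖x - xb‖ < a - b - f (x - xb) := (lt_div_iff₀ hn).mp h
      nlinarith
end

section
/- Let X be a real normed space, φ : X → ℝ∞ finite at x̄, ε ≥ 0, γ > 0, and x* ∈ ∂̂_ε φ(x̄). Suppose there is a neighborhood V of x̄ such that ⟨x*, x - x̄⟩ ≥ -γ for all x ∈ V. Then for every ξ > ε there exists a neighborhood W of x̄ such that φ(x) + ξ‖x - x̄‖ - φ(x̄) ≥ -γ for all x ∈ W (i.e., x̄ is a local γ-approximate stationary trap with weight ξ). -/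
open Filter Topology

/-- ε-subdifferential certificate for local γ-approximate stationary traps. -/
theorem stmt4 {X : Type*} [NormedAddCommGroup X] [NormedSpace ℝ X]
    (φ : X → EReal) (xb : X) (hfin : φ xb ≠ ⊤ ∧ φ xb ≠ ⊥)
    (ε : ℝ) (hε : 0 ≤ ε) (γ : ℝ) (hγ : 0 < γ)
    (f : X →L[ℝ] ℝ) (hsub : eSubgrad φ xb ε f)
    (V : Set X) (hV : V ∈ 𝓝 xb) (hge : ∀ x ∈ V, -γ ≤ f (x - xb)) :
    ∀ ξ : ℝ, ε < ξ → ∃ W ∈ 𝓝 xb, ∀ x ∈ W,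
      -(γ : EReal) ≤ φ x + ((ξ * ‖x - xb‖ : ℝ) : EReal) - φ xb := by
  intro ξ hξ
  obtain ⟨a, ha⟩ : ∃ a : ℝ, φ xb = (a : EReal) := by
    lift φ xb to ℝ using ⟨hfin.1, hfin.2⟩ with a
    exact ⟨a, rfl⟩
  have hlt : (-(ξ : EReal)) < Filter.liminf
      (fun x => (φ x - φ xb - ((f (x - xb) : ℝ) : EReal)) / ((‖x - xb‖ : ℝ) : EReal))
      (𝓝[≠] xb) := by
    refine lt_of_lt_of_le ?_ hsub
    rw [EReal.neg_lt_neg_iff]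
    exact_mod_cast hξ
  have hev : ∀ᶠ x in 𝓝[≠] xb, (-(ξ : EReal)) <
      (φ x - φ xb - ((f (x - xb) : ℝ) : EReal)) / ((‖x - xb‖ : ℝ) : EReal) :=
    eventually_lt_of_lt_liminf hlt
  rw [eventually_nhdsWithin_iff] at hev
  obtain ⟨U, hU, hUP⟩ := hev.exists_mem
  refine ⟨U ∩ V, inter_mem hU hV, ?_⟩
  rintro x ⟨hxU, hxV⟩
  by_cases hx : x = xb
  · subst hx
    rw [ha]
    simp only [sub_self, norm_zero, mul_zero, EReal.coe_zero, add_zero]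
    rw [← EReal.coe_sub]
    simp only [sub_self]
    exact_mod_cast neg_nonpos.mpr hγ.le
  · have h1 := hUP x hxU hx
    set d : ℝ := ‖x - xb‖ with hd
    have hdpos : 0 < d := by simpa [hd] using sub_ne_zero.mpr hx
    have hdE : (0 : EReal) < (d : EReal) := by exact_mod_cast hdpos
    have h2 : (-(ξ : EReal)) * (d : EReal) ≤ φ x - φ xb - ((f (x - xb) : ℝ) : EReal) :=
      (EReal.le_div_iff_mul_le hdE (by simp)).mp h1.le
    have hcoe : (-(ξ : EReal)) * (d : EReal) = ((-ξ * d : ℝ) : EReal) := by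
      rw [← EReal.coe_neg, ← EReal.coe_mul]
    rw [hcoe, ha] at h2
    have hγf : -γ ≤ f (x - xb) := hge x hxV
    by_cases hT : φ x = ⊤
    · rw [ha, hT, EReal.top_add_of_ne_bot (by simp [← EReal.coe_mul]), EReal.top_sub_coe]
      exact le_top
    · have hB : φ x ≠ ⊥ := by
        intro hb
        rw [hb] at h2
        simp only [EReal.bot_sub, le_bot_iff] at h2
        exact absurd h2 (EReal.coe_ne_bot _)
      obtain ⟨b, hb⟩ : ∃ b : ℝ, φ x = (b : EReal) := by
        lift φ x to ℝ using ⟨hT, hB⟩ with b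
        exact ⟨b, rfl⟩
      rw [hb] at h2
      rw [← EReal.coe_sub, ← EReal.coe_sub, EReal.coe_le_coe_iff] at h2
      rw [ha, hb, ← EReal.coe_add, ← EReal.coe_sub]
      have : -γ ≤ b + ξ * d - a := by nlinarith [hdpos]
      exact_mod_cast this
end

section
/- Let X be a real Banach space, φ : X → ℝ lower semicontinuous and bounded below on a closed neighborhood V of x̄, let γ > 0, ξ ≥ 0, λ > 0, and suppose x̄ is a γ-approximate stationary trap on V, i.e., φ(x) + ξ‖x - x̄‖ - φ(x̄) ≥ -γ for all x ∈ V. Then there exists x_γ ∈ V such that: (a) φ(x) + ξ‖x - x̄‖ ≥ φ(x_γ) + ξ‖x_γ - x̄‖ - γ for all x ∈ V; (b) ‖x_γ - x̄‖ ≤ λ; (c) φ(x_γ) + ξ‖x_γ - x̄‖ ≤ φ(x) + ξ‖x - x̄‖ + (γ/λ)‖x - x_γ‖ for all x ∈ V. -/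
open Filter Topology

/-- Ekeland's variational principle (weak form, on a closed set). -/
theorem ekeland_aux {X : Type*} [MetricSpace X] [CompleteSpace X]
    (S : Set X) (hS : IsClosed S) (f : X → ℝ)
    (hlsc : LowerSemicontinuousOn f S) (hbdd : BddBelow (f '' S))
    (x0 : X) (hx0 : x0 ∈ S) (α : ℝ) (hα : 0 < α) :
    ∃ y ∈ S, f y + α * dist y x0 ≤ f x0 ∧ ∀ z ∈ S, f y ≤ f z + α * dist z y := by
  obtain ⟨b, hb⟩ := hbdd
  have hbS : ∀ z ∈ S, b ≤ f z := fun z hz => hb ⟨z, hz, rfl⟩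
  -- choice step
  have key : ∀ (n : ℕ) (u : X), u ∈ S → ∃ v, v ∈ S ∧ f v + α * dist v u ≤ f u ∧
      ∀ z ∈ S, f z + α * dist z u ≤ f u → f v ≤ f z + (1/2 : ℝ)^(n+1) := by
    intro n u hu
    set T : Set X := {x | x ∈ S ∧ f x + α * dist x u ≤ f u} with hT
    have hune : u ∈ T := ⟨hu, by simp⟩
    have hTb : BddBelow (f '' T) := ⟨b, fun r hr => by
      obtain ⟨z, hz, rfl⟩ := hr; exact hbS z hz.1⟩
    have hlt : sInf (f '' T) < sInf (f '' T) + (1/2 : ℝ)^(n+1) := by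
      have : (0:ℝ) < (1/2 : ℝ)^(n+1) := by positivity
      linarith
    obtain ⟨r, hrmem, hr⟩ := exists_lt_of_csInf_lt (Set.Nonempty.image f ⟨u, hune⟩) hlt
    obtain ⟨v, hvT, rfl⟩ := hrmem
    refine ⟨v, hvT.1, hvT.2, fun z hz hz2 => ?_⟩
    have : sInf (f '' T) ≤ f z := csInf_le hTb ⟨z, ⟨hz, hz2⟩, rfl⟩
    linarith
  choose! g hg1 hg2 hg3 using key
  -- the sequence
  let x : ℕ → X := fun n => Nat.rec x0 (fun n xn => g n xn) n
  have hxsucc : ∀ n, x (n+1) = g n (x n) := fun n => rfl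
  have hx : ∀ n, x n ∈ S := by
    intro n; induction n with
    | zero => exact hx0
    | succ n ih => rw [hxsucc]; exact hg1 n (x n) ih
  have h1 : ∀ n, f (x (n+1)) + α * dist (x (n+1)) (x n) ≤ f (x n) := by
    intro n; rw [hxsucc]; exact hg2 n (x n) (hx n)
  have h2 : ∀ n, ∀ z ∈ S, f z + α * dist z (x n) ≤ f (x n) →
      f (x (n+1)) ≤ f z + (1/2 : ℝ)^(n+1) := by
    intro n; rw [hxsucc]; exact hg3 n (x n) (hx n)
  have hanti : Antitone (fun n => f (x n)) := by
    refine antitone_nat_of_succ_le fun n => ?_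
    have := h1 n
    have hd : 0 ≤ α * dist (x (n+1)) (x n) := by positivity
    linarith
  have hbbelow : BddBelow (Set.range fun n => f (x n)) :=
    ⟨b, fun r ⟨n, hn⟩ => hn ▸ hbS _ (hx n)⟩
  set L := ⨅ n, f (x n) with hL
  have hten : Tendsto (fun n => f (x n)) atTop (𝓝 L) :=
    tendsto_atTop_ciInf hanti hbbelow
  have hLle : ∀ n, L ≤ f (x n) := fun n => ciInf_le hbbelow n
  -- telescoping
  have tel : ∀ n m, n ≤ m → α * dist (x m) (x n) ≤ f (x n) - f (x m) := by
    intro n m hnm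
    induction m, hnm using Nat.le_induction with
    | base => simp
    | succ m hnm ih =>
      have htri : dist (x (m+1)) (x n) ≤ dist (x (m+1)) (x m) + dist (x m) (x n) :=
        dist_triangle _ _ _
      have := h1 m
      nlinarith [hα]
  -- Cauchy
  have hC : CauchySeq x := by
    refine cauchySeq_of_le_tendsto_0 (fun N => (f (x N) - L) / α) (fun n m N hn hm => ?_) ?_
    · have main : ∀ p q, N ≤ p → N ≤ q → p ≤ q → dist (x p) (x q) ≤ (f (x N) - L) / α := by
        intro p q hp hq hpq
        have h1' := tel p q hpq
        have h2' : f (x p) ≤ f (x N) := hanti hp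
        have h3' := hLle q
        rw [dist_comm, le_div_iff₀ hα, mul_comm]
        linarith
      rcases le_total n m with h | h
      · exact main n m hn hm h
      · rw [dist_comm]; exact main m n hm hn h
    · have : Tendsto (fun N => (f (x N) - L) / α) atTop (𝓝 ((L - L) / α)) :=
        (hten.sub tendsto_const_nhds).div_const α
      simpa using this
  obtain ⟨y, hy⟩ := cauchySeq_tendsto_of_complete hC
  have hyS : y ∈ S := hS.mem_of_tendsto hy (Eventually.of_forall hx)
  -- f y ≤ L
  have hfyL : f y ≤ L := by
    by_contra hcon
    push_neg at hcon
    obtain ⟨t, htL, hty⟩ := exists_between hcon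
    have hmem : Tendsto x atTop (𝓝[S] y) :=
      tendsto_nhdsWithin_of_tendsto_nhds_of_eventually_within x hy (Eventually.of_forall hx)
    have hev : ∀ᶠ n in atTop, t < f (x n) := hmem.eventually (hlsc y hyS t hty)
    have : t ≤ L := ge_of_tendsto hten (hev.mono fun n hn => hn.le)
    linarith
  -- y belongs to each set S_n
  have hyn : ∀ n, f y + α * dist y (x n) ≤ f (x n) := by
    intro n
    have lim1 : Tendsto (fun m => α * dist (x m) (x n)) atTop (𝓝 (α * dist y (x n))) :=
      tendsto_const_nhds.mul (hy.dist tendsto_const_nhds)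
    have lim2 : Tendsto (fun m => f (x n) - f (x m)) atTop (𝓝 (f (x n) - L)) :=
      tendsto_const_nhds.sub hten
    have hle : α * dist y (x n) ≤ f (x n) - L :=
      le_of_tendsto_of_tendsto lim1 lim2 (eventually_atTop.2 ⟨n, fun m hm => tel n m hm⟩)
    linarith [hfyL]
  have key0 : f y + α * dist y x0 ≤ f x0 := hyn 0
  refine ⟨y, hyS, key0, fun z hz => ?_⟩
  by_contra hcon
  push_neg at hcon
  have hzn : ∀ n, f (x (n+1)) ≤ f z + (1/2 : ℝ)^(n+1) := by
    intro n
    refine h2 n z hz ?_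
    have htri : dist z (x n) ≤ dist z y + dist y (x n) := dist_triangle _ _ _
    have h3 := hyn n
    nlinarith [hα]
  have lim1 : Tendsto (fun n => f (x (n+1))) atTop (𝓝 L) :=
    hten.comp (tendsto_add_atTop_nat 1)
  have lim2 : Tendsto (fun n => f z + (1/2 : ℝ)^(n+1)) atTop (𝓝 (f z + 0)) := by
    refine tendsto_const_nhds.add ?_
    have : Tendsto (fun n : ℕ => (1/2 : ℝ)^n) atTop (𝓝 0) :=
      tendsto_pow_atTop_nhds_zero_of_lt_one (by norm_num) (by norm_num)
    exact this.comp (tendsto_add_atTop_nat 1)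
  have hLz : L ≤ f z + 0 := le_of_tendsto_of_tendsto lim1 lim2 (Eventually.of_forall hzn)
  have hd : 0 ≤ α * dist z y := by positivity
  linarith [hfyL]

/-- Existence of approximate stationary traps minimizing perturbed proximal payoffs. -/
theorem stmt5 {X : Type*} [NormedAddCommGroup X] [NormedSpace ℝ X] [CompleteSpace X]
    (φ : X → ℝ) (xb : X) (V : Set X) (hVnbhd : V ∈ 𝓝 xb) (hVclosed : IsClosed V)
    (hlsc : LowerSemicontinuousOn φ V) (hbdd : BddBelow (φ '' V))
    (γ : ℝ) (hγ : 0 < γ) (ξ : ℝ) (hξ : 0 ≤ ξ) (lam : ℝ) (hlam : 0 < lam)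
    (htrap : ∀ x ∈ V, -γ ≤ φ x + ξ * ‖x - xb‖ - φ xb) :
    ∃ xg ∈ V,
      (∀ x ∈ V, φ xg + ξ * ‖xg - xb‖ - γ ≤ φ x + ξ * ‖x - xb‖) ∧
      ‖xg - xb‖ ≤ lam ∧
      (∀ x ∈ V, φ xg + ξ * ‖xg - xb‖ ≤ φ x + ξ * ‖x - xb‖ + (γ / lam) * ‖x - xg‖) := by
  have hcont : Continuous fun x : X => ξ * ‖x - xb‖ :=
    continuous_const.mul ((continuous_id.sub continuous_const).norm)
  have hflsc : LowerSemicontinuousOn (fun x => φ x + ξ * ‖x - xb‖) V :=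
    hlsc.add (hcont.lowerSemicontinuous.lowerSemicontinuousOn V)
  obtain ⟨b, hb⟩ := hbdd
  have hfbdd : BddBelow ((fun x => φ x + ξ * ‖x - xb‖) '' V) := by
    refine ⟨b, fun r hr => ?_⟩
    obtain ⟨z, hz, rfl⟩ := hr
    have h1 : b ≤ φ z := hb ⟨z, hz, rfl⟩
    have h2 : 0 ≤ ξ * ‖z - xb‖ := by positivity
    simp only; linarith
  have hxbV : xb ∈ V := mem_of_mem_nhds hVnbhd
  have hα : 0 < γ / lam := div_pos hγ hlam
  obtain ⟨y, hyV, hkey, hmin⟩ :=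
    ekeland_aux V hVclosed (fun x => φ x + ξ * ‖x - xb‖) hflsc hfbdd xb hxbV (γ/lam) hα
  simp only [dist_eq_norm, sub_self, norm_zero, mul_zero, add_zero] at hkey hmin
  have htrapy : -γ ≤ φ y + ξ * ‖y - xb‖ - φ xb := htrap y hyV
  have hnn : 0 ≤ γ / lam * ‖y - xb‖ := by positivity
  have hfy : φ y + ξ * ‖y - xb‖ ≤ φ xb := by linarith
  refine ⟨y, hyV, ?_, ?_, ?_⟩
  · intro x hx
    have := htrap x hx
    linarith
  · have h1 : γ / lam * ‖y - xb‖ ≤ γ := by linarith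
    have h2 : ‖y - xb‖ ≤ γ / (γ / lam) := (le_div_iff₀ hα).mpr (by linarith [mul_comm (γ/lam) ‖y - xb‖])
    have h3 : γ / (γ / lam) = lam := by
      field_simp
    rwa [h3] at h2
  · intro x hx
    exact hmin x hx
end
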